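/- (Bishop's theorem in Lorentz space) Every time-like curve γ : I → 𝕃⁴ parametrized by proper time admits a generalized Bishop frame of type B: there exist smooth maps Z₁,Z₂,Z₃ : I → ℝ⁴ and smooth functions b₁,b₂,b₃ : I → ℝ such that (T,Z₁,Z₂,Z₃) is an orthonormal frame along γ, T' = b₁Z₁ + b₂Z₂ + b₃Z₃, and Zᵢ' = bᵢT for i = 1,2,3. -/

import Mathlib

/-!
The frame is the Fermi–Walker transport of an orthonormal frame at one point: complete `T(s₀)`
to a Lorentz frame and transport each `Zᵢ` by the linear ODE `Zᵢ' = ⟨T', Zᵢ⟩ T`. Because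
`⟨T, T⟩ = -1`, the products `⟨T, Zᵢ⟩` and `⟨Zᵢ, Zⱼ⟩` have zero derivative along solutions, so the
frame stays orthonormal, and as `T' ⊥ T`, expanding `T'` in the frame gives `T' = ∑ ⟨T', Zᵢ⟩ Zᵢ`.
Solutions of linear ODEs with continuous coefficients exist on all of `I`: Picard–Lindelöf steps of
fixed length cover every compact subinterval, and uniqueness glues these.
-/

open Set Real

noncomputable section

/-- The Minkowski form on `ℝ⁴ = 𝕃⁴`: `⟨x,y⟩ = -x₀y₀ + x₁y₁ + x₂y₂ + x₃y₃`. -/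
def mink (x y : Fin 4 → ℝ) : ℝ :=
  -(x 0 * y 0) + x 1 * y 1 + x 2 * y 2 + x 3 * y 3

/-- `(T, Z₁, Z₂, Z₃)` is an orthonormal frame along a time-like curve with tangent `T`:
the `Zᵢ` are smooth on `I`, pairwise orthonormal (space-like) and orthogonal to `T`. -/
def OrthFrame (I : Set ℝ) (T Z₁ Z₂ Z₃ : ℝ → Fin 4 → ℝ) : Prop :=
  ContDiffOn ℝ (⊤ : ℕ∞) Z₁ I ∧ ContDiffOn ℝ (⊤ : ℕ∞) Z₂ I ∧ ContDiffOn ℝ (⊤ : ℕ∞) Z₃ I ∧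
  ∀ s ∈ I,
    mink (Z₁ s) (Z₁ s) = 1 ∧ mink (Z₂ s) (Z₂ s) = 1 ∧ mink (Z₃ s) (Z₃ s) = 1 ∧
    mink (Z₁ s) (Z₂ s) = 0 ∧ mink (Z₁ s) (Z₃ s) = 0 ∧ mink (Z₂ s) (Z₃ s) = 0 ∧
    mink (T s) (Z₁ s) = 0 ∧ mink (T s) (Z₂ s) = 0 ∧ mink (T s) (Z₃ s) = 0

/-- `γ` is a smooth time-like curve parametrized by proper time on `I`. -/
def ProperTime (I : Set ℝ) (γ : ℝ → Fin 4 → ℝ) : Prop :=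
  ContDiffOn ℝ (⊤ : ℕ∞) γ I ∧ ∀ s ∈ I, mink (deriv γ s) (deriv γ s) = -1

/-- Three smooth real functions on `I`. -/
def Smooth3 (I : Set ℝ) (x₁ x₂ x₃ : ℝ → ℝ) : Prop :=
  ContDiffOn ℝ (⊤ : ℕ∞) x₁ I ∧ ContDiffOn ℝ (⊤ : ℕ∞) x₂ I ∧ ContDiffOn ℝ (⊤ : ℕ∞) x₃ I

/-- `γ` admits a generalized Bishop frame of type B. -/
def AdmitsB (I : Set ℝ) (γ : ℝ → Fin 4 → ℝ) : Prop :=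
  ∃ (Z₁ Z₂ Z₃ : ℝ → Fin 4 → ℝ) (x₁ x₂ x₃ : ℝ → ℝ),
    OrthFrame I (deriv γ) Z₁ Z₂ Z₃ ∧ Smooth3 I x₁ x₂ x₃ ∧
    ∀ s ∈ I,
      deriv (deriv γ) s = x₁ s • Z₁ s + x₂ s • Z₂ s + x₃ s • Z₃ s ∧
      deriv Z₁ s = x₁ s • deriv γ s ∧
      deriv Z₂ s = x₂ s • deriv γ s ∧
      deriv Z₃ s = x₃ s • deriv γ s

/-- `γ` admits a generalized Bishop frame of type C. -/
def AdmitsC (I : Set ℝ) (γ : ℝ → Fin 4 → ℝ) : Prop :=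
  ∃ (Z₁ Z₂ Z₃ : ℝ → Fin 4 → ℝ) (x₁ x₂ x₃ : ℝ → ℝ),
    OrthFrame I (deriv γ) Z₁ Z₂ Z₃ ∧ Smooth3 I x₁ x₂ x₃ ∧
    ∀ s ∈ I,
      deriv (deriv γ) s = x₁ s • Z₁ s + x₂ s • Z₂ s ∧
      deriv Z₁ s = x₁ s • deriv γ s + x₃ s • Z₃ s ∧
      deriv Z₂ s = x₂ s • deriv γ s ∧
      deriv Z₃ s = (-(x₃ s)) • Z₁ s

/-- `γ` admits a generalized Bishop frame of type D. -/
def AdmitsD (I : Set ℝ) (γ : ℝ → Fin 4 → ℝ) : Prop :=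
  ∃ (Z₁ Z₂ Z₃ : ℝ → Fin 4 → ℝ) (x₁ x₂ x₃ : ℝ → ℝ),
    OrthFrame I (deriv γ) Z₁ Z₂ Z₃ ∧ Smooth3 I x₁ x₂ x₃ ∧
    ∀ s ∈ I,
      deriv (deriv γ) s = x₁ s • Z₁ s ∧
      deriv Z₁ s = x₁ s • deriv γ s + x₂ s • Z₂ s + x₃ s • Z₃ s ∧
      deriv Z₂ s = (-(x₂ s)) • Z₁ s ∧
      deriv Z₃ s = (-(x₃ s)) • Z₁ s

/-- `γ` admits a generalized Bishop frame of type F. -/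
def AdmitsF (I : Set ℝ) (γ : ℝ → Fin 4 → ℝ) : Prop :=
  ∃ (Z₁ Z₂ Z₃ : ℝ → Fin 4 → ℝ) (x₁ x₂ x₃ : ℝ → ℝ),
    OrthFrame I (deriv γ) Z₁ Z₂ Z₃ ∧ Smooth3 I x₁ x₂ x₃ ∧
    ∀ s ∈ I,
      deriv (deriv γ) s = x₁ s • Z₁ s ∧
      deriv Z₁ s = x₁ s • deriv γ s + x₂ s • Z₂ s ∧
      deriv Z₂ s = (-(x₂ s)) • Z₁ s + x₃ s • Z₃ s ∧
      deriv Z₃ s = (-(x₃ s)) • Z₂ s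

open Filter Topology Matrix
open scoped NNReal ContDiff

lemma IsOpen.exists_Icc_subset_mem_Ioo {J : Set ℝ} (hJ : IsOpen J) (hJc : J.OrdConnected)
    {s t : ℝ} (hs : s ∈ J) (ht : t ∈ J) :
    ∃ a b, Icc a b ⊆ J ∧ s ∈ Ioo a b ∧ t ∈ Ioo a b := by
  have hmin : min s t ∈ J := by rcases min_choice s t with h | h <;> rwa [h]
  have hmax : max s t ∈ J := by rcases max_choice s t with h | h <;> rwa [h]
  obtain ⟨ε₁, hε₁, h₁⟩ := Metric.isOpen_iff.1 hJ _ hmin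
  obtain ⟨ε₂, hε₂, h₂⟩ := Metric.isOpen_iff.1 hJ _ hmax
  rw [Real.ball_eq_Ioo] at h₁ h₂
  have := min_le_left s t; have := min_le_right s t
  have := le_max_left s t; have := le_max_right s t
  exact ⟨min s t - ε₁ / 2, max s t + ε₂ / 2,
    hJc.out (h₁ ⟨by linarith, by linarith⟩) (h₂ ⟨by linarith, by linarith⟩),
    ⟨by linarith, by linarith⟩, ⟨by linarith, by linarith⟩⟩

section LinearODE

variable {E : Type*} [NormedAddCommGroup E] [NormedSpace ℝ E] {M : ℝ → E →L[ℝ] E}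

lemma exists_isIntegralCurveOn_Icc_glue {v : ℝ → E → E} {γ₁ γ₂ : ℝ → E} {a b c : ℝ}
    (hab : a ≤ b) (hbc : b ≤ c) (h₁ : IsIntegralCurveOn γ₁ v (Icc a b))
    (h₂ : IsIntegralCurveOn γ₂ v (Icc b c)) (hb : γ₁ b = γ₂ b) :
    ∃ γ, EqOn γ γ₁ (Icc a b) ∧ EqOn γ γ₂ (Icc b c) ∧ IsIntegralCurveOn γ v (Icc a c) := by
  classical
  have hγ₁ : EqOn ((Iic b).piecewise γ₁ γ₂) γ₁ (Icc a b) := fun t ht ↦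
    piecewise_eq_of_mem _ _ _ ht.2
  have hγ₂ : EqOn ((Iic b).piecewise γ₁ γ₂) γ₂ (Icc b c) := by
    intro t ht
    by_cases htb : t ≤ b
    · rw [piecewise_eq_of_mem _ _ _ (mem_Iic.2 htb), le_antisymm htb ht.1, hb]
    · exact piecewise_eq_of_notMem _ _ _ htb
  refine ⟨_, hγ₁, hγ₂, fun t ht ↦ ?_⟩
  rw [← Icc_union_Icc_eq_Icc hab hbc]
  apply HasDerivWithinAt.union
  · by_cases ht₁ : t ∈ Icc a b
    · exact hγ₁ ht₁ ▸ (h₁ t ht₁).congr hγ₁ (hγ₁ ht₁)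
    · exact HasFDerivWithinAt.of_notMem_closure (by rwa [closure_Icc])
  · by_cases ht₂ : t ∈ Icc b c
    · exact hγ₂ ht₂ ▸ (h₂ t ht₂).congr hγ₂ (hγ₂ ht₂)
    · exact HasFDerivWithinAt.of_notMem_closure (by rwa [closure_Icc])

lemma IsIntegralCurveOn.eqOn_of_isOpen {J : Set ℝ} {γ₁ γ₂ : ℝ → E} {t₀ : ℝ} (hJ : IsOpen J)
    (hJc : J.OrdConnected) (hM : ContinuousOn M J) (hγ₁ : IsIntegralCurveOn γ₁ (fun t ↦ M t) J)
    (hγ₂ : IsIntegralCurveOn γ₂ (fun t ↦ M t) J) (ht₀ : t₀ ∈ J) (h : γ₁ t₀ = γ₂ t₀) :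
    EqOn γ₁ γ₂ J := by
  intro s hs
  obtain ⟨a, b, hab, hsab, ht₀ab⟩ := hJ.exists_Icc_subset_mem_Ioo hJc hs ht₀
  obtain ⟨C, hC⟩ := isCompact_Icc.exists_bound_of_continuousOn (hM.mono hab)
  have hsol {γ : ℝ → E} (hγ : IsIntegralCurveOn γ (fun t ↦ M t) J) (t : ℝ) (ht : t ∈ Ioo a b) :
      HasDerivAt γ (M t (γ t)) t ∧ γ t ∈ univ :=
    ⟨(hγ.isIntegralCurveAt (hJ.mem_nhds (hab (Ioo_subset_Icc_self ht)))).hasDerivAt, trivial⟩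
  refine ODE_solution_unique_of_mem_Ioo (K := C.toNNReal) (fun t ht ↦ ?_) ht₀ab
    (hsol hγ₁) (hsol hγ₂) h hsab
  exact ((M t).lipschitz.weaken ((hC t (Ioo_subset_Icc_self ht)).trans
    (Real.le_coe_toNNReal C))).lipschitzOnWith

theorem IsIntegralCurveOn.contDiffOn {J : Set ℝ} {γ : ℝ → E} (hJ : IsOpen J)
    (hM : ContDiffOn ℝ ∞ M J) (hγ : IsIntegralCurveOn γ (fun t ↦ M t) J) :
    ContDiffOn ℝ ∞ γ J := by
  have hderiv : EqOn (deriv γ) (fun t ↦ M t (γ t)) J := fun t ht ↦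
    ((hγ.isIntegralCurveAt (hJ.mem_nhds ht)).hasDerivAt).deriv
  refine contDiffOn_infty.2 fun n ↦ ?_
  induction n with
  | zero => exact contDiffOn_zero.2 hγ.continuousOn
  | succ n ih =>
    rw [Nat.cast_succ, contDiffOn_succ_iff_deriv_of_isOpen hJ]
    exact ⟨fun t ht ↦ (hγ t ht).differentiableWithinAt, by simp,
      ((hM.of_le (by exact_mod_cast le_top)).clm_apply ih).congr hderiv⟩

variable [CompleteSpace E]

lemma exists_isIntegralCurveOn_Icc_of_mul_le_one {a b t₀ : ℝ} {K : ℝ≥0}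
    (hM : ContinuousOn M (Icc a b)) (hK : ∀ t ∈ Icc a b, ‖M t‖ ≤ K) (hab : 2 * K * (b - a) ≤ 1)
    (ht₀ : t₀ ∈ Icc a b) (x₀ : E) :
    ∃ γ, γ t₀ = x₀ ∧ IsIntegralCurveOn γ (fun t ↦ M t) (Icc a b) := by
  -- Picard–Lindelöf on the ball of radius `‖x₀‖` around `x₀`, where `‖M t x‖ ≤ 2 K ‖x₀‖`
  have hPL : IsPicardLindelof (fun t ↦ M t) (tmin := a) (tmax := b) ⟨t₀, ht₀⟩ x₀ ‖x₀‖₊ 0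
      (2 * K * ‖x₀‖₊) K := by
    refine ⟨fun t ht ↦ ((M t).lipschitz.weaken (by exact_mod_cast hK t ht)).lipschitzOnWith,
      fun x _ ↦ hM.clm_apply continuousOn_const, fun t ht x hx ↦ ?_, ?_⟩
    · have hx' : ‖x‖ ≤ 2 * ‖x₀‖ := by
        have := norm_le_norm_add_norm_sub' x x₀
        rw [Metric.mem_closedBall, dist_eq_norm] at hx
        simp only [coe_nnnorm] at hx
        linarith
      calc ‖M t x‖ ≤ ‖M t‖ * ‖x‖ := (M t).le_opNorm x
        _ ≤ K * (2 * ‖x₀‖) := by gcongr; exact hK t ht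
        _ = _ := by push_cast; ring
    · have hmax : max (b - t₀) (t₀ - a) ≤ b - a :=
        max_le (by linarith [ht₀.1]) (by linarith [ht₀.2])
      push_cast
      calc 2 * K * ‖x₀‖ * max (b - t₀) (t₀ - a) ≤ 2 * K * ‖x₀‖ * (b - a) := by gcongr
        _ = (2 * K * (b - a)) * ‖x₀‖ := by ring
        _ ≤ 1 * ‖x₀‖ := by gcongr
        _ = ‖x₀‖ - 0 := by ring
  exact hPL.exists_eq_forall_mem_Icc_hasDerivWithinAt₀

lemma exists_isIntegralCurveOn_Icc_of_le_mul {a b t₀ δ : ℝ} {K : ℝ≥0}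
    (hM : ContinuousOn M (Icc a b)) (hK : ∀ t ∈ Icc a b, ‖M t‖ ≤ K)
    (hδ : 0 < δ) (hKδ : 2 * K * δ ≤ 1) (n : ℕ) (hn : b - a ≤ n * δ)
    (ht₀ : t₀ ∈ Icc a b) (x₀ : E) :
    ∃ γ, γ t₀ = x₀ ∧ IsIntegralCurveOn γ (fun t ↦ M t) (Icc a b) := by
  induction n generalizing a t₀ x₀ with
  | zero =>
    exact exists_isIntegralCurveOn_Icc_of_mul_le_one hM hK
      (by push_cast at hn; nlinarith [NNReal.coe_nonneg K]) ht₀ x₀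
  | succ n ih =>
    by_cases hsmall : b - a ≤ δ
    · exact exists_isIntegralCurveOn_Icc_of_mul_le_one hM hK
        (by nlinarith [NNReal.coe_nonneg K]) ht₀ x₀
    set m := a + δ
    have ham : a ≤ m := by linarith
    have hmb : m ≤ b := by linarith
    have hsub₁ : Icc a m ⊆ Icc a b := Icc_subset_Icc_right hmb
    have hsub₂ : Icc m b ⊆ Icc a b := Icc_subset_Icc_left ham
    have step (s : ℝ) (hs : s ∈ Icc a m) (y : E) :
        ∃ γ, γ s = y ∧ IsIntegralCurveOn γ (fun t ↦ M t) (Icc a m) :=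
      exists_isIntegralCurveOn_Icc_of_mul_le_one (hM.mono hsub₁) (fun t ht ↦ hK t (hsub₁ ht))
        (by simpa [m] using hKδ) hs y
    have rest (s : ℝ) (hs : s ∈ Icc m b) (y : E) :
        ∃ γ, γ s = y ∧ IsIntegralCurveOn γ (fun t ↦ M t) (Icc m b) :=
      ih (hM.mono hsub₂) (fun t ht ↦ hK t (hsub₂ ht)) (by push_cast at hn; linarith) hs y
    rcases le_or_gt t₀ m with ht₀m | ht₀m
    · obtain ⟨γ₁, hγ₁t₀, hγ₁⟩ := step t₀ ⟨ht₀.1, ht₀m⟩ x₀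
      obtain ⟨γ₂, hγ₂m, hγ₂⟩ := rest m ⟨le_rfl, hmb⟩ (γ₁ m)
      obtain ⟨γ, hγγ₁, -, hγ⟩ := exists_isIntegralCurveOn_Icc_glue ham hmb hγ₁ hγ₂ hγ₂m.symm
      exact ⟨γ, (hγγ₁ ⟨ht₀.1, ht₀m⟩).trans hγ₁t₀, hγ⟩
    · obtain ⟨γ₂, hγ₂t₀, hγ₂⟩ := rest t₀ ⟨ht₀m.le, ht₀.2⟩ x₀
      obtain ⟨γ₁, hγ₁m, hγ₁⟩ := step m ⟨ham, le_rfl⟩ (γ₂ m)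
      obtain ⟨γ, -, hγγ₂, hγ⟩ := exists_isIntegralCurveOn_Icc_glue ham hmb hγ₁ hγ₂ hγ₁m
      exact ⟨γ, (hγγ₂ ⟨ht₀m.le, ht₀.2⟩).trans hγ₂t₀, hγ⟩

theorem exists_isIntegralCurveOn_Icc {a b t₀ : ℝ} (hM : ContinuousOn M (Icc a b))
    (ht₀ : t₀ ∈ Icc a b) (x₀ : E) :
    ∃ γ, γ t₀ = x₀ ∧ IsIntegralCurveOn γ (fun t ↦ M t) (Icc a b) := by
  obtain ⟨C, hC⟩ := isCompact_Icc.exists_bound_of_continuousOn hM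
  have hK : ∀ t ∈ Icc a b, ‖M t‖ ≤ C.toNNReal := fun t ht ↦
    (hC t ht).trans (Real.le_coe_toNNReal C)
  set δ : ℝ := (2 * C.toNNReal + 1)⁻¹
  have hδ : 0 < δ := by positivity
  have hKδ : 2 * C.toNNReal * δ ≤ 1 := by
    rw [← div_eq_mul_inv, div_le_one (by positivity)]
    linarith
  obtain ⟨n, hn⟩ := exists_nat_ge ((b - a) / δ)
  exact exists_isIntegralCurveOn_Icc_of_le_mul hM hK hδ hKδ n
    ((div_le_iff₀ hδ).1 hn) ht₀ x₀

theorem exists_isIntegralCurveOn_of_isOpen {J : Set ℝ} {t₀ : ℝ} (hJ : IsOpen J)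
    (hJc : J.OrdConnected) (hM : ContinuousOn M J) (ht₀ : t₀ ∈ J) (x₀ : E) :
    ∃ γ, γ t₀ = x₀ ∧ IsIntegralCurveOn γ (fun t ↦ M t) J := by
  have hloc : ∀ s ∈ J, ∃ W ⊆ J, IsOpen W ∧ W.OrdConnected ∧ s ∈ W ∧ t₀ ∈ W ∧
      ∃ γ, γ t₀ = x₀ ∧ IsIntegralCurveOn γ (fun t ↦ M t) W := by
    intro s hs
    obtain ⟨a, b, hab, hsab, ht₀ab⟩ := hJ.exists_Icc_subset_mem_Ioo hJc hs ht₀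
    obtain ⟨γ, hγt₀, hγ⟩ :=
      exists_isIntegralCurveOn_Icc (hM.mono hab) (Ioo_subset_Icc_self ht₀ab) x₀
    exact ⟨Ioo a b, Ioo_subset_Icc_self.trans hab, isOpen_Ioo, ordConnected_Ioo, hsab, ht₀ab,
      γ, hγt₀, hγ.mono Ioo_subset_Icc_self⟩
  choose! W hWJ hWo hWc hsW ht₀W γ hγt₀ hγ using hloc
  -- the local solutions agree on overlaps, so `s ↦ γ s s` is a solution near every point
  refine ⟨fun s ↦ γ s s, hγt₀ t₀ ht₀, fun s hs ↦ ?_⟩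
  have hγs : (fun t ↦ γ t t) =ᶠ[𝓝 s] γ s := by
    filter_upwards [(hWo s hs).mem_nhds (hsW s hs)] with t ht
    have htJ := hWJ s hs ht
    exact IsIntegralCurveOn.eqOn_of_isOpen ((hWo t htJ).inter (hWo s hs))
      ((hWc t htJ).inter (hWc s hs)) (hM.mono (inter_subset_left.trans (hWJ t htJ)))
      ((hγ t htJ).mono inter_subset_left) ((hγ s hs).mono inter_subset_right)
      ⟨ht₀W t htJ, ht₀W s hs⟩ ((hγt₀ t htJ).trans (hγt₀ s hs).symm) ⟨hsW t htJ, ht⟩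
  have hderiv := ((hγ s hs).isIntegralCurveAt ((hWo s hs).mem_nhds (hsW s hs))).hasDerivAt
  exact (hderiv.congr_of_eventuallyEq hγs).hasDerivWithinAt

end LinearODE

def minkSign : Fin 4 → ℝ := ![-1, 1, 1, 1]

lemma mink_eq_sum (x y : Fin 4 → ℝ) : mink x y = ∑ i, minkSign i * x i * y i := by
  simp [mink, minkSign, Fin.sum_univ_four]

lemma mink_comm (x y : Fin 4 → ℝ) : mink x y = mink y x := by
  simp only [mink]; ring

lemma mink_smul_left (c : ℝ) (x y : Fin 4 → ℝ) : mink (c • x) y = c * mink x y := by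
  simp only [mink, Pi.smul_apply, smul_eq_mul]; ring

lemma mink_smul_right (c : ℝ) (x y : Fin 4 → ℝ) : mink x (c • y) = c * mink x y := by
  rw [mink_comm, mink_smul_left, mink_comm]

def minkowskiForm : (Fin 4 → ℝ) →L[ℝ] (Fin 4 → ℝ) →L[ℝ] ℝ :=
  ∑ i, minkSign i • (ContinuousLinearMap.proj i).smulRight (ContinuousLinearMap.proj i)

@[simp] lemma minkowskiForm_apply (x y : Fin 4 → ℝ) : minkowskiForm x y = mink x y := by
  simp [minkowskiForm, mink_eq_sum, mul_assoc]

lemma HasDerivAt.mink {f g : ℝ → Fin 4 → ℝ} {f' g' : Fin 4 → ℝ} {s : ℝ}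
    (hf : HasDerivAt f f' s) (hg : HasDerivAt g g' s) :
    HasDerivAt (fun t ↦ mink (f t) (g t)) (mink f' (g s) + mink (f s) g') s := by
  simpa using (minkowskiForm.hasFDerivAt.comp_hasDerivAt s hf).clm_apply hg

lemma ContDiffOn.mink {n : WithTop ℕ∞} {f g : ℝ → Fin 4 → ℝ} {I : Set ℝ}
    (hf : ContDiffOn ℝ n f I) (hg : ContDiffOn ℝ n g I) :
    ContDiffOn ℝ n (fun t ↦ mink (f t) (g t)) I := by
  simpa using (minkowskiForm.contDiff.comp_contDiffOn hf).clm_apply hg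

def IsLorentzFrame (e : Fin 4 → Fin 4 → ℝ) : Prop :=
  ∀ i j, mink (e i) (e j) = diagonal minkSign i j

lemma isLorentzFrame_vecCons_iff {τ : Fin 4 → ℝ} {z : Fin 3 → Fin 4 → ℝ} :
    IsLorentzFrame (vecCons τ z) ↔ mink τ τ = -1 ∧ (∀ i, mink τ (z i) = 0) ∧
      ∀ i j, mink (z i) (z j) = if i = j then 1 else 0 := by
  simp [IsLorentzFrame, Fin.forall_fin_succ, diagonal_apply, minkSign, mink_comm _ τ]
  tauto

lemma IsLorentzFrame.eq_sum {e : Fin 4 → Fin 4 → ℝ} (he : IsLorentzFrame e) (w : Fin 4 → ℝ) :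
    w = ∑ i, (minkSign i * mink w (e i)) • e i := by
  have hsq (k : Fin 4) : minkSign k * minkSign k = 1 := by fin_cases k <;> simp [minkSign]
  have hB : of e * diagonal minkSign * (of e)ᵀ = diagonal minkSign := by
    ext i j
    rw [← he i j, mink_eq_sum, mul_apply]
    simp only [mul_diagonal, transpose_apply, of_apply]
    exact Finset.sum_congr rfl fun k _ ↦ by ring
  -- for `B = of e`, `D = diagonal minkSign`: `D Bᵀ D` is a right, hence a left, inverse of `B`
  have hB' : (of e)ᵀ * diagonal minkSign * of e = diagonal minkSign := by
    have hDD : diagonal minkSign * diagonal minkSign = 1 := by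
      simp [diagonal_mul_diagonal, hsq]
    have : (diagonal minkSign * (of e)ᵀ * diagonal minkSign) * of e = 1 :=
      mul_eq_one_comm.1 (by simp only [← Matrix.mul_assoc, hB, hDD])
    calc _ = diagonal minkSign * ((diagonal minkSign * (of e)ᵀ * diagonal minkSign) * of e) := by
          simp only [← Matrix.mul_assoc, hDD, Matrix.one_mul]
      _ = _ := by rw [this, Matrix.mul_one]
  ext k
  have hcol (l : Fin 4) : ∑ i, e i k * minkSign i * e i l = diagonal minkSign k l := by
    rw [← hB', mul_apply]
    simp only [mul_diagonal, transpose_apply, of_apply]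
  simp only [Finset.sum_apply, Pi.smul_apply, smul_eq_mul, mink_eq_sum, Finset.mul_sum,
    Finset.sum_mul]
  rw [Finset.sum_comm]
  calc w k = ∑ l, minkSign l * w l * diagonal minkSign k l := by
        simp [diagonal_apply, mul_right_comm _ (w k), hsq]
    _ = _ := Finset.sum_congr rfl fun l _ ↦ by
        rw [← hcol, Finset.mul_sum]
        exact Finset.sum_congr rfl fun i _ ↦ by ring

lemma eq_sum_of_isLorentzFrame_vecCons {τ w : Fin 4 → ℝ} {z : Fin 3 → Fin 4 → ℝ}
    (he : IsLorentzFrame (vecCons τ z)) (hw : mink w τ = 0) :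
    w = ∑ i, mink w (z i) • z i := by
  simpa [Fin.sum_univ_four, Fin.sum_univ_three, minkSign, hw] using he.eq_sum w

lemma exists_isLorentzFrame_vecCons {τ : Fin 4 → ℝ} (hτ : mink τ τ = -1) :
    ∃ z, IsLorentzFrame (vecCons τ z) := by
  set c := |τ 0|
  have hc2 : c ^ 2 = τ 0 ^ 2 := sq_abs _
  have hc : 1 ≤ c := by
    simp only [mink] at hτ
    nlinarith [abs_nonneg (τ 0), sq_nonneg (τ 1), sq_nonneg (τ 2), sq_nonneg (τ 3)]
  -- `z i` is the image of the `i+1`-st basis vector under the boost taking `e₀` to `±τ`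
  let z : Fin 3 → Fin 4 → ℝ := fun i ↦
    Pi.single i.succ 1 + (τ i.succ / (1 + c)) • (τ + (τ 0 / c) • Pi.single 0 1)
  refine ⟨z, isLorentzFrame_vecCons_iff.2 ⟨hτ, fun i ↦ ?_, fun i j ↦ ?_⟩⟩
  · simp only [mink] at hτ
    fin_cases i <;> simp [z, mink] <;> field_simp <;> grind
  · simp only [mink] at hτ
    fin_cases i <;> fin_cases j <;> simp [z, mink] <;> field_simp <;> grind

lemma mink_eq_zero_of_hasDerivAt {T : ℝ → Fin 4 → ℝ} {T' : Fin 4 → ℝ}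
    {s c : ℝ} (hT : HasDerivAt T T' s) (hTT : ∀ᶠ t in 𝓝 s, mink (T t) (T t) = c) :
    mink (T s) T' = 0 := by
  have := (hT.mink hT).unique ((hasDerivAt_const s c).congr_of_eventuallyEq hTT)
  rw [mink_comm T'] at this
  linarith

lemma IsOpen.eq_of_hasDerivAt_zero {I : Set ℝ} (hI : IsOpen I) (hIc : I.OrdConnected)
    {φ : ℝ → ℝ} (hφ : ∀ s ∈ I, HasDerivAt φ 0 s) {x y : ℝ} (hx : x ∈ I) (hy : y ∈ I) :
    φ x = φ y :=
  hI.is_const_of_deriv_eq_zero hIc.isPreconnected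
    (fun s hs ↦ (hφ s hs).differentiableAt.differentiableWithinAt) (fun s hs ↦ (hφ s hs).deriv)
    hx hy

section Transport

variable {T Y Z : ℝ → Fin 4 → ℝ} {A : Fin 4 → ℝ} {s : ℝ}

lemma hasDerivAt_mink_tangent_transported (hT : HasDerivAt T A s)
    (hZ : HasDerivAt Z (mink A (Z s) • T s) s) (hTT : mink (T s) (T s) = -1) :
    HasDerivAt (fun t ↦ mink (T t) (Z t)) 0 s := by
  convert hT.mink hZ using 1
  rw [mink_smul_right, hTT]
  ring

lemma hasDerivAt_mink_transported (hY : HasDerivAt Y (mink A (Y s) • T s) s)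
    (hZ : HasDerivAt Z (mink A (Z s) • T s) s) (hTY : mink (T s) (Y s) = 0)
    (hTZ : mink (T s) (Z s) = 0) :
    HasDerivAt (fun t ↦ mink (Y t) (Z t)) 0 s := by
  convert hY.mink hZ using 1
  rw [mink_smul_left, mink_smul_right, hTZ, mink_comm (Y s), hTY]
  ring

end Transport

theorem exists_transported_frame {I : Set ℝ} (hI : IsOpen I) (hIc : I.OrdConnected)
    {T : ℝ → Fin 4 → ℝ} (hT : ContDiffOn ℝ ∞ T I) (hTT : ∀ s ∈ I, mink (T s) (T s) = -1) :
    ∃ Z : Fin 3 → ℝ → Fin 4 → ℝ, (∀ i, ContDiffOn ℝ ∞ (Z i) I) ∧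
      ∀ s ∈ I, IsLorentzFrame (vecCons (T s) fun i ↦ Z i s) ∧
        ∀ i, HasDerivAt (Z i) (mink (deriv T s) (Z i s) • T s) s := by
  rcases I.eq_empty_or_nonempty with rfl | ⟨s₀, hs₀⟩
  · exact ⟨0, fun _ ↦ contDiffOn_empty, by simp⟩
  have hA : ContDiffOn ℝ ∞ (deriv T) I := ((contDiffOn_infty_iff_deriv_of_isOpen hI).1 hT).2
  have hT' (s : ℝ) (hs : s ∈ I) : HasDerivAt T (deriv T s) s :=
    ((hT.differentiableOn (by simp)).differentiableAt (hI.mem_nhds hs)).hasDerivAt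
  let M : ℝ → (Fin 4 → ℝ) →L[ℝ] (Fin 4 → ℝ) := fun t ↦ (minkowskiForm (deriv T t)).smulRight (T t)
  have hM : ContDiffOn ℝ ∞ M I :=
    contDiffOn_clm_apply.2 fun y ↦ by
      simp only [M, ContinuousLinearMap.smulRight_apply, minkowskiForm_apply]
      exact (hA.mink contDiffOn_const).smul hT
  obtain ⟨z, hz⟩ := exists_isLorentzFrame_vecCons (hTT s₀ hs₀)
  obtain ⟨-, hTz, hzz⟩ := isLorentzFrame_vecCons_iff.1 hz
  choose Z hZs₀ hZ using fun i ↦ exists_isIntegralCurveOn_of_isOpen hI hIc hM.continuousOn hs₀ (z i)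
  have hZ' (i : Fin 3) (s : ℝ) (hs : s ∈ I) :
      HasDerivAt (Z i) (mink (deriv T s) (Z i s) • T s) s := by
    simpa [M] using ((hZ i).isIntegralCurveAt (hI.mem_nhds hs)).hasDerivAt
  have hTZ (i : Fin 3) (s : ℝ) (hs : s ∈ I) : mink (T s) (Z i s) = 0 := by
    rw [hI.eq_of_hasDerivAt_zero hIc (fun t ht ↦ hasDerivAt_mink_tangent_transported (hT' t ht)
      (hZ' i t ht) (hTT t ht)) hs hs₀, hZs₀, hTz]
  have hZZ (i j : Fin 3) (s : ℝ) (hs : s ∈ I) : mink (Z i s) (Z j s) = if i = j then 1 else 0 := by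
    rw [hI.eq_of_hasDerivAt_zero hIc (fun t ht ↦ hasDerivAt_mink_transported (hZ' i t ht)
      (hZ' j t ht) (hTZ i t ht) (hTZ j t ht)) hs hs₀, hZs₀, hZs₀, hzz]
  exact ⟨Z, fun i ↦ (hZ i).contDiffOn hI hM, fun s hs ↦
    ⟨isLorentzFrame_vecCons_iff.2 ⟨hTT s hs, fun i ↦ hTZ i s hs, fun i j ↦ hZZ i j s hs⟩,
      fun i ↦ hZ' i s hs⟩⟩

/-- Bishop's theorem in Lorentz space: every time-like curve parametrized
by proper time admits a generalized Bishop frame of type B. -/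
theorem stmt_7 (I : Set ℝ) (hIopen : IsOpen I) (hIconn : I.OrdConnected)
    (γ : ℝ → Fin 4 → ℝ) (hγ : ProperTime I γ) :
    ∃ (Z₁ Z₂ Z₃ : ℝ → Fin 4 → ℝ) (b₁ b₂ b₃ : ℝ → ℝ),
      OrthFrame I (deriv γ) Z₁ Z₂ Z₃ ∧ Smooth3 I b₁ b₂ b₃ ∧
      ∀ s ∈ I,
        deriv (deriv γ) s = b₁ s • Z₁ s + b₂ s • Z₂ s + b₃ s • Z₃ s ∧
        deriv Z₁ s = b₁ s • deriv γ s ∧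
        deriv Z₂ s = b₂ s • deriv γ s ∧
        deriv Z₃ s = b₃ s • deriv γ s := by
  obtain ⟨hγ, hTT⟩ := hγ
  have hT : ContDiffOn ℝ ∞ (deriv γ) I := ((contDiffOn_infty_iff_deriv_of_isOpen hIopen).1 hγ).2
  have hA : ContDiffOn ℝ ∞ (deriv (deriv γ)) I :=
    ((contDiffOn_infty_iff_deriv_of_isOpen hIopen).1 hT).2
  obtain ⟨Z, hZ, hframe⟩ := exists_transported_frame hIopen hIconn hT hTT
  refine ⟨Z 0, Z 1, Z 2, fun s ↦ mink (deriv (deriv γ) s) (Z 0 s),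
    fun s ↦ mink (deriv (deriv γ) s) (Z 1 s), fun s ↦ mink (deriv (deriv γ) s) (Z 2 s),
    ⟨hZ 0, hZ 1, hZ 2, fun s hs ↦ ?_⟩, ⟨hA.mink (hZ 0), hA.mink (hZ 1), hA.mink (hZ 2)⟩,
    fun s hs ↦ ⟨?_, ((hframe s hs).2 0).deriv, ((hframe s hs).2 1).deriv,
      ((hframe s hs).2 2).deriv⟩⟩
  · obtain ⟨-, hTZ, hZZ⟩ := isLorentzFrame_vecCons_iff.1 (hframe s hs).1
    simp [hTZ, hZZ]
  · have hTA : mink (deriv γ s) (deriv (deriv γ) s) = 0 :=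
      mink_eq_zero_of_hasDerivAt
        ((hT.differentiableOn (by simp)).differentiableAt (hIopen.mem_nhds hs)).hasDerivAt
        (eventually_of_mem (hIopen.mem_nhds hs) hTT)
    simpa [Fin.sum_univ_three] using
      eq_sum_of_isLorentzFrame_vecCons (hframe s hs).1 ((mink_comm _ _).trans hTA)
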